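/- Let 0 < λ < 1, η > 0, and t₀ > 2η. For any m ∈ ℕ, any sequence c : ℕ → ℝ with |c i| < η for all i, and any t ∈ [0, t₀], the quantity P(t) = λ^t + λ^(t₀ - t) + ∑_{j=1}^{m} λ^(t + j·t₀ + ∑_{i=1}^{j} c i) is bounded above by 2 + λ^(t₀/2)/(1 - λ^(t₀/2)). -/

import Mathlib

/-! With `r = λ^(t₀/2)`, the first two terms are at most `1`. Since `c i > -η > -t₀/2`, the
`j`-th exponent is at least `j t₀/2`, so the `j`-th summand is at most `r^j`, and the sum is at most
the geometric tail `r / (1 - r)`. -/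

open Finset

lemma geom_sum_Icc_one_le_div_one_sub {K : Type*} [Field K] [LinearOrder K] [IsStrictOrderedRing K]
    {r : K} (hr0 : 0 ≤ r) (hr1 : r < 1) (m : ℕ) :
    ∑ j ∈ Icc 1 m, r ^ j ≤ r / (1 - r) := by
  simpa [Finset.Ico_add_one_right_eq_Icc] using
    geom_sum_Ico_le_of_lt_one (m := 1) (n := m + 1) hr0 hr1

lemma neg_mul_le_sum_Icc_one {c : ℕ → ℝ} {a : ℝ} (hc : ∀ i, -a ≤ c i) (j : ℕ) :
    -(j * a) ≤ ∑ i ∈ Icc 1 j, c i := by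
  have h := card_nsmul_le_sum (Icc 1 j) c (-a) fun i _ ↦ hc i
  rwa [Nat.card_Icc, add_tsub_cancel_right, nsmul_eq_mul, mul_neg] at h

lemma Real.rpow_le_rpow_pow_of_mul_le {lam s x : ℝ} {j : ℕ} (hlam0 : 0 < lam) (hlam1 : lam ≤ 1)
    (h : j * s ≤ x) : lam ^ x ≤ (lam ^ s) ^ j := by
  rw [← Real.rpow_natCast, ← Real.rpow_mul hlam0.le, mul_comm]
  exact Real.rpow_le_rpow_of_exponent_ge hlam0 hlam1 h

theorem stmt_0 (lam η t₀ : ℝ) (hlam0 : 0 < lam) (hlam1 : lam < 1)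
    (hη : 0 < η) (ht₀ : t₀ > 2 * η) (m : ℕ) (c : ℕ → ℝ) (hc : ∀ i, |c i| < η)
    (t : ℝ) (ht : t ∈ Set.Icc 0 t₀) :
    lam ^ t + lam ^ (t₀ - t) +
      ∑ j ∈ Finset.Icc 1 m, lam ^ (t + (j : ℝ) * t₀ + ∑ i ∈ Finset.Icc 1 j, c i)
    ≤ 2 + lam ^ (t₀ / 2) / (1 - lam ^ (t₀ / 2)) := by
  obtain ⟨ht0, ht1⟩ := ht
  set r := lam ^ (t₀ / 2)
  have hr0 : 0 ≤ r := (Real.rpow_pos_of_pos hlam0 _).le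
  have hr1 : r < 1 := Real.rpow_lt_one hlam0.le hlam1 (by linarith)
  have hc' : ∀ i, -(t₀ / 2) ≤ c i := fun i ↦ by linarith [(abs_lt.mp (hc i)).1]
  have hterm : ∀ j ∈ Icc 1 m, lam ^ (t + (j : ℝ) * t₀ + ∑ i ∈ Icc 1 j, c i) ≤ r ^ j :=
    fun j _ ↦ Real.rpow_le_rpow_pow_of_mul_le hlam0 hlam1.le
      (by linarith [neg_mul_le_sum_Icc_one hc' j])
  calc lam ^ t + lam ^ (t₀ - t) +
        ∑ j ∈ Icc 1 m, lam ^ (t + (j : ℝ) * t₀ + ∑ i ∈ Icc 1 j, c i)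
      ≤ 1 + 1 + ∑ j ∈ Icc 1 m, r ^ j := by
        gcongr ?_ + ?_ + ?_
        · exact Real.rpow_le_one hlam0.le hlam1.le ht0
        · exact Real.rpow_le_one hlam0.le hlam1.le (by linarith)
        · exact sum_le_sum hterm
    _ ≤ 2 + r / (1 - r) := by linarith [geom_sum_Icc_one_le_div_one_sub hr0 hr1 m]
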